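/- In the interdomain routing game on nodes {1,2,3,d} where each node i ∈ {1,2,3} chooses a next hop among its neighbors, utilities are determined by the induced path to d with preferences u_1(132d) > u_1(1d) > u_1(13d), u_2(213d) > u_2(2d) > u_2(21d), u_3(321d) > u_3(3d) > u_3(32d), and utility −∞ (worse than all paths) for any other outcome, the profile where all of 1, 2, 3 forward directly to d is the unique pure Nash equilibrium, and from every strategy profile there is a best-response improvement path reaching it (the game is weakly acyclic under best response), even though the game contains a best-response cycle of length 6. -/

import Mathlib

section Defs

variable {n : ℕ} {S : Fin n → Type*}

/-- A better-response transition: `s'` differs from `s` only in player `i`'s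
strategy, which strictly improves `i`'s utility. -/
def IsBetter (u : ∀ i : Fin n, (∀ j, S j) → ℝ) (s s' : ∀ j, S j) : Prop :=
  ∃ i, s' = Function.update s i (s' i) ∧ s' i ≠ s i ∧ u i s < u i s'

/-- A best-response transition: additionally the new strategy maximizes
`i`'s utility against the others' strategies. -/
def IsBest (u : ∀ i : Fin n, (∀ j, S j) → ℝ) (s s' : ∀ j, S j) : Prop :=
  ∃ i, s' = Function.update s i (s' i) ∧ s' i ≠ s i ∧ u i s < u i s' ∧
    ∀ t : S i, u i (Function.update s i t) ≤ u i s'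

/-- Pure Nash equilibrium. -/
def IsNash (u : ∀ i : Fin n, (∀ j, S j) → ℝ) (s : ∀ j, S j) : Prop :=
  ∀ i, ∀ t : S i, u i (Function.update s i t) ≤ u i s

/-- Weak acyclicity (under better response). -/
def WeaklyAcyclic (u : ∀ i : Fin n, (∀ j, S j) → ℝ) : Prop :=
  ∀ s, ∃ e, Relation.ReflTransGen (IsBetter u) s e ∧ IsNash u e

/-- Weak acyclicity under best response. -/
def WeaklyAcyclicBest (u : ∀ i : Fin n, (∀ j, S j) → ℝ) : Prop :=
  ∀ s, ∃ e, Relation.ReflTransGen (IsBest u) s e ∧ IsNash u e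

/-- Membership of a profile in the subgame given by strategy sets `T`. -/
def InSub (T : ∀ i, Set (S i)) (s : ∀ j, S j) : Prop := ∀ i, s i ∈ T i

/-- Pure Nash equilibrium of the subgame given by `T`. -/
def IsNashOn (u : ∀ i : Fin n, (∀ j, S j) → ℝ) (T : ∀ i, Set (S i)) (s : ∀ j, S j) : Prop :=
  InSub T s ∧ ∀ i, ∀ t ∈ T i, u i (Function.update s i t) ≤ u i s

/-- Best-response transition within the subgame given by `T`. -/
def IsBestOn (u : ∀ i : Fin n, (∀ j, S j) → ℝ) (T : ∀ i, Set (S i)) (s s' : ∀ j, S j) : Prop :=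
  InSub T s ∧ InSub T s' ∧ ∃ i, s' = Function.update s i (s' i) ∧ s' i ≠ s i ∧
    u i s < u i s' ∧ ∀ t ∈ T i, u i (Function.update s i t) ≤ u i s'

/-- Subgame stability: every subgame has a pure Nash equilibrium. -/
def SubgameStable (u : ∀ i : Fin n, (∀ j, S j) → ℝ) : Prop :=
  ∀ T : ∀ i, Set (S i), (∀ i, (T i).Nonempty) → ∃ s, IsNashOn u T s

/-- Unique subgame stability: every subgame has exactly one pure Nash equilibrium. -/
def USS (u : ∀ i : Fin n, (∀ j, S j) → ℝ) : Prop :=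
  ∀ T : ∀ i, Set (S i), (∀ i, (T i).Nonempty) → ∃! s, IsNashOn u T s

/-- Strict game: no player is indifferent between two of its own strategies
against a fixed profile of the others. -/
def StrictGame (u : ∀ i : Fin n, (∀ j, S j) → ℝ) : Prop :=
  ∀ i (s : ∀ j, S j) (t : S i), t ≠ s i → u i (Function.update s i t) ≠ u i s

/-- Reachability by best-response improvement paths. -/
def BRReach (u : ∀ i : Fin n, (∀ j, S j) → ℝ) (s t : ∀ j, S j) : Prop :=
  Relation.ReflTransGen (IsBest u) s t

/-- The (strategy sets of the) subgame spanned by `BR_Γ(s)`. -/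
def SpanBR (u : ∀ i : Fin n, (∀ j, S j) → ℝ) (s : ∀ j, S j) : ∀ i, Set (S i) :=
  fun i => {x | ∃ t, BRReach u s t ∧ t i = x}

/-- A sink of the best-response dynamics: a nonempty set of profiles closed
under best-response transitions and strongly connected. -/
def IsSinkBest (u : ∀ i : Fin n, (∀ j, S j) → ℝ) (X : Set (∀ j, S j)) : Prop :=
  X.Nonempty ∧ (∀ s ∈ X, ∀ s', IsBest u s s' → s' ∈ X) ∧
    ∀ s ∈ X, ∀ s' ∈ X, Relation.ReflTransGen (IsBest u) s s'

end Defs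

/-- Strategy set of node `i ∈ {1,2,3}` (indexed `0,1,2`): a next hop, which is
another node (`some j`, `j ≠ i`) or the destination `d` (`none`). -/
def Hop (i : Fin 3) : Type := {x : Option (Fin 3) // x ≠ some i}

/-- Utilities of the interdomain routing game: node `0` (i.e. node 1) prefers
the path `132d`, then `1d`, then `13d`; cyclically for the others; all other
outcomes (including having no path to `d`) get the bottom utility `0`. -/
def ru : ∀ i : Fin 3, (∀ j, Hop j) → ℝ := fun i s =>
  if i = 0 then
    if (s 0).1 = none then 2
    else if (s 0).1 = some 2 ∧ (s 2).1 = none then 1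
    else if (s 0).1 = some 2 ∧ (s 2).1 = some 1 ∧ (s 1).1 = none then 3
    else 0
  else if i = 1 then
    if (s 1).1 = none then 2
    else if (s 1).1 = some 0 ∧ (s 0).1 = none then 1
    else if (s 1).1 = some 0 ∧ (s 0).1 = some 2 ∧ (s 2).1 = none then 3
    else 0
  else
    if (s 2).1 = none then 2
    else if (s 2).1 = some 1 ∧ (s 1).1 = none then 1
    else if (s 2).1 = some 1 ∧ (s 1).1 = some 0 ∧ (s 0).1 = none then 3
    else 0

/-- The profile where every node forwards directly to `d`. -/
def allToD : ∀ j, Hop j := fun j => ⟨none, by simp⟩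

/-!
Against any profile, node `i` has a unique best response: the detour through `i + 2` when the
path `i + 2 → i + 1 → d` is in place (utility 3), and the direct link to `d` otherwise
(utility 2; every other choice scores at most 1). If some node does not forward to `d`, one such
node has `d` as its best response: were every indirect node `i` to want its detour, then `i + 2`
would be indirect and want its own detour, which needs `i = (i + 2) + 1` to be direct. Switching
that node to `d` lowers the number of indirect nodes, so best responses lead from every profile
to the all-direct profile, and no other profile is an equilibrium.
-/

open Function

theorem Relation.ReflTransGen.of_forall_ne_exists_measure_lt {α : Type*} {r : α → α → Prop}
    (f : α → ℕ) {e : α} (h : ∀ a ≠ e, ∃ b, r a b ∧ f b < f a) (a : α) : ReflTransGen r a e := by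
  induction a using (measure f).wf.induction with
  | _ a ih =>
    by_cases ha : a = e
    · rw [ha]
    · obtain ⟨b, hab, hb⟩ := h a ha
      exact .head hab (ih b hb)

section StrictBestResponse

variable {n : ℕ} {S : Fin n → Type*}

def IsStrictBestResponse (u : Fin n → (∀ j, S j) → ℝ) (br : ∀ i, (∀ j, S j) → S i) :
    Prop :=
  ∀ i s (t : S i), t ≠ br i s → u i (update s i t) < u i (update s i (br i s))

variable {u : Fin n → (∀ j, S j) → ℝ} {br : ∀ i, (∀ j, S j) → S i}

theorem IsStrictBestResponse.le (h : IsStrictBestResponse u br) (i : Fin n) (s : ∀ j, S j)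
    (t : S i) : u i (update s i t) ≤ u i (update s i (br i s)) := by
  by_cases ht : t = br i s
  · rw [ht]
  · exact (h i s t ht).le

theorem IsStrictBestResponse.isBest_update (h : IsStrictBestResponse u br) {s : ∀ j, S j}
    {i : Fin n} (hs : s i ≠ br i s) : IsBest u s (update s i (br i s)) := by
  refine ⟨i, by simp, by simpa using hs.symm, ?_, fun t => by simpa using h.le i s t⟩
  simpa using h i s (s i) hs

theorem IsStrictBestResponse.isNash_iff (h : IsStrictBestResponse u br) {s : ∀ j, S j} :
    IsNash u s ↔ ∀ i, s i = br i s := by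
  refine ⟨fun hN i => by_contra fun hs => ?_, fun hs i t => ?_⟩
  · have hlt := h i s (s i) hs
    rw [update_eq_self] at hlt
    exact (hN i (br i s)).not_gt hlt
  · simpa [← hs i] using h.le i s t

end StrictBestResponse

instance (i : Fin 3) : DecidableEq (Hop i) :=
  inferInstanceAs (DecidableEq {x : Option (Fin 3) // x ≠ some i})

theorem Hop.val_cases {i : Fin 3} (t : Hop i) :
    t.1 = none ∨ t.1 = some (i + 1) ∨ t.1 = some (i + 2) := by
  obtain ⟨_ | j, h⟩ := t
  · exact .inl rfl
  · have key : ∀ i j : Fin 3, j ≠ i → j = i + 1 ∨ j = i + 2 := by decide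
    simpa using key i j (by simpa using h)

def routeBR (i : Fin 3) (s : ∀ j, Hop j) : Hop i :=
  if (s (i + 2)).1 = some (i + 1) ∧ (s (i + 1)).1 = none then
    ⟨some (i + 2), by fin_cases i <;> decide⟩
  else ⟨none, nofun⟩

theorem isStrictBestResponse_routeBR : IsStrictBestResponse ru routeBR := by
  intro i s t ht
  replace ht : t.1 ≠ (routeBR i s).1 := fun h => ht (Subtype.ext h)
  have h0 := t.val_cases
  have h1 := (s (i + 1)).val_cases
  have h2 := (s (i + 2)).val_cases
  fin_cases i <;>
    simp only [Fin.zero_eta, Fin.mk_one, Fin.reduceFinMk, Fin.isValue, Fin.reduceAdd, zero_add]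
      at h0 h1 h2 <;>
    rcases h0 with h0 | h0 | h0 <;> rcases h1 with h1 | h1 | h1 <;>
    rcases h2 with h2 | h2 | h2 <;>
    simp [ru, routeBR, update, h0, h1, h2] at ht ⊢ <;> norm_num

theorem routeBR_allToD (i : Fin 3) : routeBR i allToD = allToD i :=
  if_neg (by simp [allToD])

theorem exists_ne_none_routeBR_eq_none {s : ∀ j, Hop j} (hs : s ≠ allToD) :
    ∃ i, (s i).1 ≠ none ∧ (routeBR i s).1 = none := by
  obtain ⟨i, hi⟩ : ∃ i, (s i).1 ≠ none := by
    by_contra! h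
    exact hs (funext fun j => Subtype.ext (h j))
  by_contra! hdetour
  have detour : ∀ j, (s j).1 ≠ none → (s (j + 2)).1 = some (j + 1) ∧ (s (j + 1)).1 = none := by
    intro j hj
    by_contra hj'
    exact hdetour j hj (by simp [routeBR, hj'])
  have h2 := detour (i + 2) (by simp [(detour i hi).1])
  have : i + 2 + 1 = i := by fin_cases i <;> rfl
  exact hi (this ▸ h2.2)

def numIndirect (s : ∀ j, Hop j) : ℕ :=
  (Finset.univ.filter fun j => (s j).1 ≠ none).card

theorem numIndirect_update_lt {s : ∀ j, Hop j} {i : Fin 3} {t : Hop i} (hs : (s i).1 ≠ none)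
    (ht : t.1 = none) : numIndirect (update s i t) < numIndirect s := by
  apply Finset.card_lt_card
  rw [Finset.ssubset_iff_of_subset]
  · exact ⟨i, by simpa using hs, by simp [ht]⟩
  · intro j
    rcases eq_or_ne j i with rfl | hj <;> simp_all

theorem isNash_ru_iff (s : ∀ j, Hop j) : IsNash ru s ↔ s = allToD := by
  rw [isStrictBestResponse_routeBR.isNash_iff]
  constructor
  · intro h
    by_contra hs
    obtain ⟨i, hi, hbr⟩ := exists_ne_none_routeBR_eq_none hs
    exact hi (h i ▸ hbr)
  · rintro rfl i
    rw [routeBR_allToD]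

theorem reflTransGen_isBest_ru_allToD (s : ∀ j, Hop j) :
    Relation.ReflTransGen (IsBest ru) s allToD := by
  refine .of_forall_ne_exists_measure_lt numIndirect (fun s hs => ?_) s
  obtain ⟨i, hi, hbr⟩ := exists_ne_none_routeBR_eq_none hs
  exact ⟨_, isStrictBestResponse_routeBR.isBest_update fun h => hi (h ▸ hbr),
    numIndirect_update_lt hi hbr⟩

def mkProfile (a b c : Option (Fin 3)) (ha : a ≠ some 0 := by decide)
    (hb : b ≠ some 1 := by decide) (hc : c ≠ some 2 := by decide) : ∀ j, Hop j
  | 0 => ⟨a, ha⟩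
  | 1 => ⟨b, hb⟩
  | 2 => ⟨c, hc⟩

def brCycle : Fin 6 → ∀ j, Hop j
  | 0 => mkProfile (some 2) (some 0) none
  | 1 => mkProfile none (some 0) none
  | 2 => mkProfile none (some 0) (some 1)
  | 3 => mkProfile none none (some 1)
  | 4 => mkProfile (some 2) none (some 1)
  | 5 => mkProfile (some 2) none none

theorem brCycle_injective : Injective brCycle := by decide

theorem brCycle_succ (k : Fin 6) : ∃ i, brCycle k i ≠ routeBR i (brCycle k) ∧
    brCycle (k + 1) = update (brCycle k) i (routeBR i (brCycle k)) := by
  revert k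
  decide

theorem stmt19 :
    (∀ s, IsNash ru s ↔ s = allToD) ∧
    WeaklyAcyclicBest ru ∧
    (∃ c : Fin 6 → (∀ j, Hop j), Function.Injective c ∧
      ∀ k : Fin 6, IsBest ru (c k) (c (k + 1))) := by
  refine ⟨isNash_ru_iff, fun s => ⟨allToD, reflTransGen_isBest_ru_allToD s, ?_⟩,
    brCycle, brCycle_injective, fun k => ?_⟩
  · exact (isNash_ru_iff _).2 rfl
  · obtain ⟨i, hne, heq⟩ := brCycle_succ k
    exact heq ▸ isStrictBestResponse_routeBR.isBest_update hne
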